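/- arXiv:1808.02385 — 6 statements merged into one kernel-verified Lean document; each statement's English description precedes it below -/
import Mathlib

section
/- Let z1, z2, z3 ∈ ℂ be non-collinear and let R > 0. Then there exists a constant C > 0 (depending only on z1, z2, z3 and R) such that for all z, w ∈ ℂ with |z| ≤ R and |w| ≤ R, one has |z − w| ≤ C · max_{j=1,2,3} | |z − z_j| − |w − z_j| |. (Lipschitz stability of the phase retrieval from three distances.) -/
/-!
Expanding squares, `‖z - c‖² - ‖w - c‖²` differs from `‖z‖² - ‖w‖²` by `-2⟪z - w, c⟫`, so the
differences of these quantities for `c = z₁` and `c = zⱼ` give `2⟪z - w, zⱼ - z₁⟫`. Each of them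
factors as `(‖z - c‖ - ‖w - c‖)(‖z - c‖ + ‖w - c‖)`, whose second factor is bounded on the ball.
Hence the inner products of `z - w` with the spanning vectors `z₂ - z₁`, `z₃ - z₁` are controlled
by the distance errors, and on a finite-dimensional space the injective linear map
`u ↦ (⟪u, z₂ - z₁⟫, ⟪u, z₃ - z₁⟫)` is antilipschitz.
-/

open RealInnerProductSpace

theorem abs_sq_norm_sub_sub_sq_norm_sub_le {E : Type*} [SeminormedAddCommGroup E] {z w : E}
    {R : ℝ} (hz : ‖z‖ ≤ R) (hw : ‖w‖ ≤ R) (c : E) :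
    |‖z - c‖ ^ 2 - ‖w - c‖ ^ 2| ≤ 2 * (R + ‖c‖) * |‖z - c‖ - ‖w - c‖| := by
  have hsum : ‖z - c‖ + ‖w - c‖ ≤ 2 * (R + ‖c‖) := by
    linarith [norm_sub_le z c, norm_sub_le w c]
  rw [sq_sub_sq, abs_mul, abs_of_nonneg (by positivity : 0 ≤ ‖z - c‖ + ‖w - c‖)]
  gcongr

section

variable {E : Type*} [NormedAddCommGroup E] [InnerProductSpace ℝ E]

theorem two_mul_inner_sub_sub_eq (z w c c' : E) :
    2 * ⟪z - w, c' - c⟫ = (‖z - c‖ ^ 2 - ‖w - c‖ ^ 2) - (‖z - c'‖ ^ 2 - ‖w - c'‖ ^ 2) := by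
  simp only [norm_sub_sq_real, inner_sub_left, inner_sub_right]
  ring

theorem abs_inner_sub_sub_le {z w : E} {R ε : ℝ} (hz : ‖z‖ ≤ R) (hw : ‖w‖ ≤ R) {c c' : E}
    (hc : |‖z - c‖ - ‖w - c‖| ≤ ε) (hc' : |‖z - c'‖ - ‖w - c'‖| ≤ ε) :
    |⟪z - w, c' - c⟫| ≤ (2 * R + ‖c‖ + ‖c'‖) * ε := by
  have h := abs_sq_norm_sub_sub_sq_norm_sub_le hz hw c
  have h' := abs_sq_norm_sub_sub_sq_norm_sub_le hz hw c'
  have hR : 0 ≤ R := (norm_nonneg z).trans hz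
  have hsq : |2 * ⟪z - w, c' - c⟫| ≤ 2 * (R + ‖c‖) * ε + 2 * (R + ‖c'‖) * ε := by
    rw [two_mul_inner_sub_sub_eq]
    refine (abs_sub _ _).trans (add_le_add (h.trans ?_) (h'.trans ?_)) <;> gcongr
  rw [abs_mul, abs_two] at hsq
  linarith

theorem exists_norm_le_mul_norm_inner_of_span_eq_top [FiniteDimensional ℝ E] {ι : Type*}
    [Fintype ι] {v : ι → E} (hv : Submodule.span ℝ (Set.range v) = ⊤) :
    ∃ C > 0, ∀ u : E, ‖u‖ ≤ C * ‖fun i ↦ ⟪u, v i⟫‖ := by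
  let f : E →ₗ[ℝ] ι → ℝ := LinearMap.pi fun i ↦ innerₗ E (v i)
  have hf : ∀ u, f u = fun i ↦ ⟪u, v i⟫ := fun u ↦ funext fun i ↦ real_inner_comm _ _
  have hker : LinearMap.ker f = ⊥ := by
    refine LinearMap.ker_eq_bot'.mpr fun u hu ↦ inner_self_eq_zero (𝕜 := ℝ) |>.mp ?_
    have hspan : Submodule.span ℝ (Set.range v) ≤ LinearMap.ker (innerₗ E u) :=
      Submodule.span_le.mpr <| Set.range_subset_iff.mpr fun i ↦ by
        simpa [hf] using congrFun hu i
    exact hspan (hv ▸ Submodule.mem_top)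
  obtain ⟨K, hK, hanti⟩ := f.exists_antilipschitzWith hker
  exact ⟨K, hK, fun u ↦ hf u ▸ hanti.le_mul_norm (map_zero f) u⟩

end

/-- Lipschitz stability of phase retrieval from three distances to
non-collinear points, for points in a fixed ball of radius `R`. -/
theorem phase_retrieval_lipschitz_stability
    (z₁ z₂ z₃ : ℂ) (hnc : LinearIndependent ℝ ![z₂ - z₁, z₃ - z₁])
    (R : ℝ) (hR : 0 < R) :
    ∃ C > 0, ∀ z w : ℂ, ‖z‖ ≤ R → ‖w‖ ≤ R →
      ‖z - w‖ ≤
        C * max (max (|‖z - z₁‖ - ‖w - z₁‖|)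
                     (|‖z - z₂‖ - ‖w - z₂‖|))
                (|‖z - z₃‖ - ‖w - z₃‖|) := by
  obtain ⟨C₀, hC₀, hstab⟩ := exists_norm_le_mul_norm_inner_of_span_eq_top
    (hnc.span_eq_top_of_card_eq_finrank' (by simp [Complex.finrank_real_complex]))
  set K := 2 * R + ‖z₁‖ + ‖z₂‖ + ‖z₃‖
  refine ⟨C₀ * K, by positivity, fun z w hz hw ↦ ?_⟩
  set M := max (max (|‖z - z₁‖ - ‖w - z₁‖|) (|‖z - z₂‖ - ‖w - z₂‖|)) (|‖z - z₃‖ - ‖w - z₃‖|)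
  have h₁M : |‖z - z₁‖ - ‖w - z₁‖| ≤ M := le_max_of_le_left (le_max_left _ _)
  have h₂ : |⟪z - w, z₂ - z₁⟫| ≤ (2 * R + ‖z₁‖ + ‖z₂‖) * M :=
    abs_inner_sub_sub_le hz hw h₁M (le_max_of_le_left (le_max_right _ _))
  have h₃ : |⟪z - w, z₃ - z₁⟫| ≤ (2 * R + ‖z₁‖ + ‖z₃‖) * M :=
    abs_inner_sub_sub_le hz hw h₁M (le_max_right _ _)
  have hinner : ‖fun i ↦ ⟪z - w, ![z₂ - z₁, z₃ - z₁] i⟫‖ ≤ K * M := by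
    refine (pi_norm_le_iff_of_nonneg (by positivity)).mpr (Fin.forall_fin_two.mpr ⟨?_, ?_⟩)
    · exact h₂.trans (by gcongr; linarith [norm_nonneg z₃])
    · exact h₃.trans (by gcongr; linarith [norm_nonneg z₂])
  calc ‖z - w‖ ≤ C₀ * ‖fun i ↦ ⟪z - w, ![z₂ - z₁, z₃ - z₁] i⟫‖ := hstab (z - w)
    _ ≤ C₀ * K * M := by rw [mul_assoc]; gcongr
end

section
/- Let n ∈ {2, 3}, let 0 < k_min < k_max, let f1, f2 : ℝ^n → ℂ be integrable with compact support, and let g : ℝ → ℂ be continuous on (k_min, k_max) and not identically zero there. If g(k) u∞_{f1}(x̂, k) = g(k) u∞_{f2}(x̂, k) for all unit vectors x̂ ∈ ℝ^n and all k ∈ (k_min, k_max), then f1 = f2 almost everywhere. (Uniqueness for the inverse source problem with phased multi-frequency far field data.) -/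
/-!
Fix a direction `x̂`. For compactly supported `f`, `k ↦ u∞_f(x̂, k)` is the restriction to the
real axis of the entire function `z ↦ ∫ exp(-i z ⟨x̂, y⟩) f(y) dy`. Where `g ≠ 0` (a nonempty open
set, by continuity) the data give `u∞_{f₁}(x̂, ·) = u∞_{f₂}(x̂, ·)`, so by the identity theorem the
two far fields agree for every `k`. Since `u∞_f(x̂, 2πr) = 𝓕 f (r x̂)` and every point of `ℝⁿ` has
the form `r x̂`, the Fourier transforms of `f₁` and `f₂` coincide, and Fourier transformation is
injective on `L¹`.
-/

open MeasureTheory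
open scoped RealInnerProductSpace

/-- The far field pattern of the source with spatial part `f`:
`u∞_f(x̂, k) = ∫ e^{-ik⟨x̂,y⟩} f(y) dy`. -/
noncomputable def farField {n : ℕ} (f : EuclideanSpace ℝ (Fin n) → ℂ)
    (xhat : EuclideanSpace ℝ (Fin n)) (k : ℝ) : ℂ :=
  ∫ y, Complex.exp (-(Complex.I * (k : ℂ) * ((⟪xhat, y⟫ : ℝ) : ℂ))) * f y

open Complex Filter Topology SchwartzMap
open scoped FourierTransform

theorem hasDerivAt_integral_cexp_mul_mul {α : Type*} [MeasurableSpace α] {μ : Measure α}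
    {t : α → ℝ} {f : α → ℂ} {R : ℝ} (ht : AEStronglyMeasurable t μ) (hf : Integrable f μ)
    (hR : ∀ y, f y ≠ 0 → |t y| ≤ R) (z₀ : ℂ) :
    HasDerivAt (fun z => ∫ y, cexp (z * t y) * f y ∂μ)
      (∫ y, t y * cexp (z₀ * t y) * f y ∂μ) z₀ := by
  have hmeas : ∀ z : ℂ, AEStronglyMeasurable (fun y => cexp (z * t y)) μ := fun z =>
    (continuous_exp.comp (continuous_const.mul continuous_ofReal)).comp_aestronglyMeasurable ht
  have hexp_le : ∀ z y r, ‖z‖ ≤ r → f y ≠ 0 → ‖cexp (z * t y)‖ ≤ Real.exp (r * R) :=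
    fun z y r hz hy => (norm_exp_le_exp_norm _).trans <| Real.exp_le_exp.2 <| by
      rw [norm_mul, norm_real, Real.norm_eq_abs]
      exact mul_le_mul hz (hR y hy) (abs_nonneg _) ((norm_nonneg z).trans hz)
  refine (hasDerivAt_integral_of_dominated_loc_of_deriv_le (Metric.ball_mem_nhds z₀ one_pos)
    (F := fun z y => cexp (z * t y) * f y) (F' := fun z y => t y * cexp (z * t y) * f y)
    (bound := fun y => R * Real.exp ((‖z₀‖ + 1) * R) * ‖f y‖)
    (.of_forall fun z => (hmeas z).mul hf.1) ?_ ?_ ?_ ?_ ?_).2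
  · refine (hf.norm.const_mul (Real.exp (‖z₀‖ * R))).mono' ((hmeas z₀).mul hf.1)
      (.of_forall fun y => ?_)
    by_cases hy : f y = 0
    · simp [hy]
    · rw [norm_mul]
      exact mul_le_mul_of_nonneg_right (hexp_le z₀ y _ le_rfl hy) (norm_nonneg _)
  · exact ((continuous_ofReal.comp_aestronglyMeasurable ht).mul (hmeas z₀)).mul hf.1
  · refine .of_forall fun y z hzball => ?_
    by_cases hy : f y = 0
    · simp [hy]
    have hz : ‖z‖ ≤ ‖z₀‖ + 1 := by
      have := norm_le_norm_add_norm_sub' z z₀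
      rw [Metric.mem_ball, dist_eq_norm] at hzball
      linarith
    rw [norm_mul, norm_mul, norm_real, Real.norm_eq_abs]
    exact mul_le_mul_of_nonneg_right (mul_le_mul (hR y hy) (hexp_le z y _ hz hy) (norm_nonneg _)
      ((abs_nonneg _).trans (hR y hy))) (norm_nonneg _)
  · exact hf.norm.const_mul _
  · exact .of_forall fun y z _ =>
      (((hasDerivAt_id z).mul_const (t y : ℂ)).cexp.mul_const (f y)).congr_deriv
        (by rw [id_eq]; ring)

theorem HasCompactSupport.exists_abs_inner_le {V E : Type*} [NormedAddCommGroup V]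
    [InnerProductSpace ℝ V] [Zero E] [TopologicalSpace E] {f : V → E} (hf : HasCompactSupport f)
    (ξ : V) : ∃ R, ∀ y, f y ≠ 0 → |⟪ξ, y⟫| ≤ R := by
  obtain ⟨R, hR⟩ := hf.isCompact.isBounded.subset_closedBall 0
  refine ⟨‖ξ‖ * R, fun y hy => (abs_real_inner_le_norm ξ y).trans ?_⟩
  have hyR : ‖y‖ ≤ R := mem_closedBall_zero_iff.1 (hR (subset_tsupport f hy))
  exact mul_le_mul_of_nonneg_left hyR (norm_nonneg ξ)

theorem Differentiable.eq_of_eventuallyEq_ofReal {E : Type*} [NormedAddCommGroup E]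
    [NormedSpace ℂ E] [CompleteSpace E] {F G : ℂ → E} (hF : Differentiable ℂ F)
    (hG : Differentiable ℂ G) {x₀ : ℝ}
    (h : (fun x : ℝ => F x) =ᶠ[𝓝 x₀] fun x => G x) : F = G := by
  have hreal : Tendsto ofReal (𝓝[≠] x₀) (𝓝[≠] (x₀ : ℂ)) :=
    continuous_ofReal.continuousWithinAt.tendsto_nhdsWithin fun x hx => ofReal_injective.ne hx
  have hfreq : ∃ᶠ z in 𝓝[≠] (x₀ : ℂ), F z = G z :=
    hreal.frequently (h.filter_mono nhdsWithin_le_nhds).frequently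
  funext z
  exact (analyticOnNhd_univ_iff_differentiable.2 hF).eqOn_of_preconnected_of_frequently_eq
    (analyticOnNhd_univ_iff_differentiable.2 hG) isPreconnected_univ (Set.mem_univ _) hfreq
    (Set.mem_univ z)

theorem exists_eq_smul_of_norm_eq_one {E : Type*} [NormedAddCommGroup E] [NormedSpace ℝ E]
    [Nontrivial E] (w : E) : ∃ r : ℝ, ∃ u : E, ‖u‖ = 1 ∧ w = r • u := by
  by_cases hw : w = 0
  · obtain ⟨u, hu⟩ := exists_norm_eq E zero_le_one
    exact ⟨0, u, hu, by rw [hw, zero_smul]⟩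
  · exact ⟨‖w‖, ‖w‖⁻¹ • w, norm_smul_inv_norm hw, by
      rw [smul_smul, mul_inv_cancel₀ (norm_ne_zero_iff.2 hw), one_smul]⟩

theorem MeasureTheory.Integrable.ae_eq_of_fourier_eq {V F : Type*} [NormedAddCommGroup V]
    [InnerProductSpace ℝ V] [MeasurableSpace V] [BorelSpace V] [FiniteDimensional ℝ V]
    [NormedAddCommGroup F] [NormedSpace ℂ F] [CompleteSpace F] {f₁ f₂ : V → F}
    (h₁ : Integrable f₁) (h₂ : Integrable f₂) (h : 𝓕 f₁ = 𝓕 f₂) : f₁ =ᵐ[volume] f₂ := by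
  refine ae_eq_of_integral_contDiff_smul_eq h₁.locallyIntegrable h₂.locallyIntegrable
    fun φ hφ hφc => ?_
  let ψ : 𝓢(V, ℂ) := 𝓕⁻ ((hφc.comp_left (g := ofRealCLM) (map_zero _)).toSchwartzMap
    (by fun_prop))
  have hψ : 𝓕 (ψ : V → ℂ) = fun x => (φ x : ℂ) := by
    rw [← SchwartzMap.fourier_coe, FourierInvPair.fourier_fourierInv_eq]; rfl
  have hduality : ∀ f : V → F, Integrable f → ∫ x, φ x • f x = ∫ ξ, ψ ξ • 𝓕 f ξ := by
    intro f hf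
    have hflip := VectorFourier.integral_fourierIntegral_smul_eq_flip (μ := volume) (ν := volume)
      (L := innerₗ V) Real.continuous_fourierChar continuous_inner ψ.integrable hf
    rw [show (innerₗ V).flip = innerₗ V from LinearMap.ext₂ fun x y => real_inner_comm x y] at hflip
    calc ∫ x, φ x • f x = ∫ x, 𝓕 (ψ : V → ℂ) x • f x := by simp only [hψ, coe_smul]
      _ = ∫ ξ, ψ ξ • 𝓕 f ξ := hflip
  rw [hduality f₁ h₁, hduality f₂ h₂, h]

theorem farField_two_pi_mul_eq_fourier {n : ℕ} (f : EuclideanSpace ℝ (Fin n) → ℂ)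
    (xhat : EuclideanSpace ℝ (Fin n)) (r : ℝ) :
    farField f xhat (2 * Real.pi * r) = 𝓕 f (r • xhat) := by
  rw [Real.fourier_eq', farField]
  congr 1 with y
  rw [smul_eq_mul, real_inner_smul_right, real_inner_comm]
  push_cast
  ring_nf

noncomputable def complexFarField {n : ℕ} (f : EuclideanSpace ℝ (Fin n) → ℂ)
    (xhat : EuclideanSpace ℝ (Fin n)) (z : ℂ) : ℂ :=
  ∫ y, cexp (-(I * z * ⟪xhat, y⟫)) * f y

theorem differentiable_complexFarField {n : ℕ} {f : EuclideanSpace ℝ (Fin n) → ℂ}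
    (hf : Integrable f) (hcs : HasCompactSupport f) (xhat : EuclideanSpace ℝ (Fin n)) :
    Differentiable ℂ (complexFarField f xhat) := by
  obtain ⟨R, hR⟩ := hcs.exists_abs_inner_le xhat
  have hcont : Continuous fun y => ⟪xhat, y⟫ := continuous_const.inner continuous_id
  have hlaplace : Differentiable ℂ fun z => ∫ y, cexp (z * ⟪xhat, y⟫) * f y := fun z =>
    (hasDerivAt_integral_cexp_mul_mul hcont.aestronglyMeasurable hf hR z).differentiableAt
  have hcomp : complexFarField f xhat = fun z => ∫ y, cexp (-(I * z) * ⟪xhat, y⟫) * f y := by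
    funext z
    simp only [complexFarField, neg_mul]
  rw [hcomp]
  exact hlaplace.comp (by fun_prop)

theorem farField_eq_of_eventuallyEq {n : ℕ} {f₁ f₂ : EuclideanSpace ℝ (Fin n) → ℂ}
    (hf₁ : Integrable f₁) (hcs₁ : HasCompactSupport f₁)
    (hf₂ : Integrable f₂) (hcs₂ : HasCompactSupport f₂) {xhat : EuclideanSpace ℝ (Fin n)}
    {k₀ : ℝ} (h : farField f₁ xhat =ᶠ[𝓝 k₀] farField f₂ xhat) :
    farField f₁ xhat = farField f₂ xhat :=
  have hext := (differentiable_complexFarField hf₁ hcs₁ xhat).eq_of_eventuallyEq_ofReal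
    (differentiable_complexFarField hf₂ hcs₂ xhat) h
  funext fun k => congr_fun hext k

theorem inverse_source_uniqueness_phased_general
    (n : ℕ) (hn : n = 2 ∨ n = 3) (kmin kmax : ℝ)
    (f₁ f₂ : EuclideanSpace ℝ (Fin n) → ℂ)
    (hf₁ : Integrable f₁) (hcs₁ : HasCompactSupport f₁)
    (hf₂ : Integrable f₂) (hcs₂ : HasCompactSupport f₂)
    (g : ℝ → ℂ) (hg : ContinuousOn g (Set.Ioo kmin kmax))
    (hgne : ∃ k ∈ Set.Ioo kmin kmax, g k ≠ 0)
    (hdata : ∀ xhat : EuclideanSpace ℝ (Fin n), ‖xhat‖ = 1 →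
      ∀ k ∈ Set.Ioo kmin kmax,
        g k * farField f₁ xhat k = g k * farField f₂ xhat k) :
    f₁ =ᵐ[volume] f₂ := by
  have : Nontrivial (EuclideanSpace ℝ (Fin n)) := by rcases hn with rfl | rfl <;> infer_instance
  obtain ⟨k₀, hk₀, hgk₀⟩ := hgne
  have hnear : ∀ᶠ k in 𝓝 k₀, k ∈ Set.Ioo kmin kmax ∧ g k ≠ 0 :=
    (isOpen_Ioo.eventually_mem hk₀).and
      ((hg.continuousAt (isOpen_Ioo.mem_nhds hk₀)).eventually_ne hgk₀)
  have hfar : ∀ xhat, ‖xhat‖ = 1 → farField f₁ xhat = farField f₂ xhat := fun xhat hxhat =>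
    farField_eq_of_eventuallyEq hf₁ hcs₁ hf₂ hcs₂ <|
      hnear.mono fun k ⟨hk, hgk⟩ => mul_left_cancel₀ hgk (hdata xhat hxhat k hk)
  refine hf₁.ae_eq_of_fourier_eq hf₂ (funext fun w => ?_)
  obtain ⟨r, u, hu, rfl⟩ := exists_eq_smul_of_norm_eq_one w
  rw [← farField_two_pi_mul_eq_fourier, ← farField_two_pi_mul_eq_fourier, hfar u hu]

/-- Uniqueness for the inverse source problem with phased multi-frequency
far field data: for a separable source `S(y,k) = f(y)g(k)`, the data
`g(k)u∞_f(x̂,k)` over all directions and all `k ∈ (k_min, k_max)` determine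
the spatial part `f` uniquely. -/
theorem inverse_source_uniqueness_phased
    (n : ℕ) (hn : n = 2 ∨ n = 3) (kmin kmax : ℝ)
    (hk : 0 < kmin) (hkk : kmin < kmax)
    (f₁ f₂ : EuclideanSpace ℝ (Fin n) → ℂ)
    (hf₁ : Integrable f₁) (hcs₁ : HasCompactSupport f₁)
    (hf₂ : Integrable f₂) (hcs₂ : HasCompactSupport f₂)
    (g : ℝ → ℂ) (hg : ContinuousOn g (Set.Ioo kmin kmax))
    (hgne : ∃ k ∈ Set.Ioo kmin kmax, g k ≠ 0)
    (hdata : ∀ xhat : EuclideanSpace ℝ (Fin n), ‖xhat‖ = 1 →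
      ∀ k ∈ Set.Ioo kmin kmax,
        g k * farField f₁ xhat k = g k * farField f₂ xhat k) :
    f₁ =ᵐ[volume] f₂ :=
  inverse_source_uniqueness_phased_general n hn kmin kmax f₁ f₂ hf₁ hcs₁ hf₂ hcs₂ g hg hgne hdata
end

section
/- Let n ≥ 1 and let f : ℝ^n → ℂ be integrable with compact support. If the Fourier-type transform f̂(ξ) := ∫_{ℝ^n} e^{−i⟨ξ,y⟩} f(y) dy vanishes for all ξ in some nonempty open subset U ⊆ ℝ^n, then f = 0 almost everywhere. -/
/-!
Mathlib's `𝓕 f w` is the given transform at `2π w`, so `𝓕 f` vanishes near some point `ξ`.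
All its derivatives at `ξ` then vanish, and differentiating under the integral sign identifies
them with the moments `∫ ∏ⱼ ⟪v, mⱼ⟫ 𝐞(-⟪v, ξ⟫) f v dv`. Hence the compactly supported function
`𝐞(-⟪·, ξ⟫) f` integrates to zero against every polynomial, by Stone–Weierstrass on its support
against every continuous function, and so vanishes almost everywhere. This replaces analytic
continuation of `𝓕 f`: only its Taylor coefficients at one point are used.
-/

open MeasureTheory Filter Topology
open scoped RealInnerProductSpace FourierTransform Real

section CompactSupport

variable {X : Type*} [TopologicalSpace X] [T2Space X] [MeasurableSpace X] [OpensMeasurableSpace X]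
  {μ : Measure X}

theorem MeasureTheory.Integrable.continuous_mul_of_hasCompactSupport {R : Type*} [NormedRing R]
    [SecondCountableTopologyEither X R] {φ g : X → R} (hg : Integrable g μ)
    (hcs : HasCompactSupport g) (hφ : Continuous φ) :
    Integrable (fun x => φ x * g x) μ := by
  refine (integrableOn_iff_integrable_of_support_subset ?_).mp
    (hg.integrableOn.continuousOn_mul hφ.continuousOn hcs)
  exact (Function.support_mul_subset_right _ _).trans (subset_tsupport g)

theorem integral_mul_eq_zero_of_separatesPoints {A : Subalgebra ℝ C(X, ℝ)}
    (hA : A.SeparatesPoints) {g : X → ℂ} (hg : Integrable g μ) (hcs : HasCompactSupport g)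
    (h : ∀ p ∈ A, ∫ x, (p x : ℂ) * g x ∂μ = 0) (φ : C(X, ℝ)) :
    ∫ x, (φ x : ℂ) * g x ∂μ = 0 := by
  have integrable (q : C(X, ℝ)) : Integrable (fun x => (q x : ℂ) * g x) μ :=
    hg.continuous_mul_of_hasCompactSupport hcs (by fun_prop)
  have bound : ∀ ε > 0, ‖∫ x, (φ x : ℂ) * g x ∂μ‖ ≤ ε * ∫ x, ‖g x‖ ∂μ := by
    intro ε hε
    obtain ⟨p, hpA, hp⟩ :=
      ContinuousMap.exists_mem_subalgebra_near_continuous_of_isCompact_of_separatesPoints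
        hA φ hcs hε
    have pointwise (x : X) : ‖((φ x - p x : ℝ) : ℂ) * g x‖ ≤ ε * ‖g x‖ := by
      by_cases hx : x ∈ tsupport g
      · rw [norm_mul, Complex.norm_real, norm_sub_rev]
        exact mul_le_mul_of_nonneg_right (hp x hx).le (norm_nonneg _)
      · simp [image_eq_zero_of_notMem_tsupport hx]
    calc ‖∫ x, (φ x : ℂ) * g x ∂μ‖ = ‖∫ x, ((φ x - p x : ℝ) : ℂ) * g x ∂μ‖ := by
          simp only [Complex.ofReal_sub, sub_mul]
          rw [integral_sub (integrable φ) (integrable p), h p hpA, sub_zero]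
      _ ≤ ∫ x, ε * ‖g x‖ ∂μ :=
          norm_integral_le_of_norm_le (hg.norm.const_mul ε) (ae_of_all _ pointwise)
      _ = ε * ∫ x, ‖g x‖ ∂μ := integral_const_mul _ _
  have hlim : Tendsto (fun ε : ℝ => ε * ∫ x, ‖g x‖ ∂μ) (𝓝[>] 0) (𝓝 0) :=
    tendsto_nhdsWithin_of_tendsto_nhds (Continuous.tendsto' (by fun_prop) 0 0 (zero_mul _))
  exact norm_le_zero_iff.mp (ge_of_tendsto hlim (eventually_nhdsWithin_of_forall bound))

end CompactSupport

section InnerPolynomial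

variable {V : Type*} [NormedAddCommGroup V] [InnerProductSpace ℝ V]

variable (V) in
def innerPolynomialFunctions : Subalgebra ℝ C(V, ℝ) :=
  Algebra.adjoin ℝ (Set.range fun w : V => (innerSL ℝ w : C(V, ℝ)))

theorem innerPolynomialFunctions_separatesPoints :
    (innerPolynomialFunctions V).SeparatesPoints := by
  intro x y hxy
  refine ⟨_, ⟨_, Algebra.subset_adjoin ⟨x - y, rfl⟩, rfl⟩, fun h => hxy ?_⟩
  have : ⟪x - y, x - y⟫ = 0 := by
    rw [inner_sub_right, sub_eq_zero]
    exact h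
  exact sub_eq_zero.mp (inner_self_eq_zero.mp this)

theorem exists_eq_prod_inner_of_mem_closure {p : C(V, ℝ)}
    (hp : p ∈ Submonoid.closure (Set.range fun w : V => (innerSL ℝ w : C(V, ℝ)))) :
    ∃ (k : ℕ) (m : Fin k → V), ∀ v, p v = ∏ j, ⟪v, m j⟫ := by
  induction hp using Submonoid.closure_induction with
  | mem p hp =>
    obtain ⟨w, rfl⟩ := hp
    exact ⟨1, fun _ => w, fun v => by simp [real_inner_comm]⟩
  | one => exact ⟨0, Fin.elim0, fun v => by simp⟩
  | mul p q _ _ hp hq =>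
    obtain ⟨k, m, hm⟩ := hp
    obtain ⟨l, n, hn⟩ := hq
    exact ⟨k + l, Fin.append m n, fun v => by simp [Fin.prod_univ_add, hm, hn]⟩

variable [MeasurableSpace V] [OpensMeasurableSpace V] {μ : Measure V}

theorem integral_mul_eq_zero_of_mem_innerPolynomialFunctions {g : V → ℂ} (hg : Integrable g μ)
    (hcs : HasCompactSupport g)
    (hmom : ∀ (k : ℕ) (m : Fin k → V), ∫ v, ((∏ j, ⟪v, m j⟫ : ℝ) : ℂ) * g v ∂μ = 0)
    {p : C(V, ℝ)} (hp : p ∈ innerPolynomialFunctions V) :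
    ∫ v, (p v : ℂ) * g v ∂μ = 0 := by
  have integrable (q : C(V, ℝ)) : Integrable (fun v => (q v : ℂ) * g v) μ :=
    hg.continuous_mul_of_hasCompactSupport hcs (by fun_prop)
  rw [← Subalgebra.mem_toSubmodule, innerPolynomialFunctions, Algebra.adjoin_eq_span] at hp
  induction hp using Submodule.span_induction with
  | mem p hp =>
    obtain ⟨k, m, hm⟩ := exists_eq_prod_inner_of_mem_closure hp
    simpa only [hm] using hmom k m
  | zero => simp
  | add p q _ _ hp hq =>
    simp only [ContinuousMap.add_apply, Complex.ofReal_add, add_mul]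
    rw [integral_add (integrable p) (integrable q), hp, hq, add_zero]
  | smul c p _ hp =>
    simp only [ContinuousMap.smul_apply, smul_eq_mul, Complex.ofReal_mul, mul_assoc]
    rw [integral_const_mul, hp, mul_zero]

theorem ae_eq_zero_of_integral_prod_inner_mul_eq_zero [FiniteDimensional ℝ V] [BorelSpace V]
    {g : V → ℂ} (hg : Integrable g μ) (hcs : HasCompactSupport g)
    (hmom : ∀ (k : ℕ) (m : Fin k → V), ∫ v, ((∏ j, ⟪v, m j⟫ : ℝ) : ℂ) * g v ∂μ = 0) :
    g =ᵐ[μ] 0 := by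
  refine ae_eq_zero_of_integral_contDiff_smul_eq_zero hg.locallyIntegrable fun φ hφ _ => ?_
  simpa [Complex.real_smul] using integral_mul_eq_zero_of_separatesPoints
    innerPolynomialFunctions_separatesPoints hg hcs
    (fun p hp => integral_mul_eq_zero_of_mem_innerPolynomialFunctions hg hcs hmom hp)
    ⟨φ, hφ.continuous⟩

end InnerPolynomial

section Fourier

variable {V : Type*} [NormedAddCommGroup V] [InnerProductSpace ℝ V] [FiniteDimensional ℝ V]
  [MeasurableSpace V] [BorelSpace V]

theorem Real.fourier_eq_integral_exp_inner_mul (f : V → ℂ) (w : V) :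
    𝓕 f w = ∫ y, Complex.exp (-(Complex.I * ((⟪(2 * π) • w, y⟫ : ℝ) : ℂ))) * f y := by
  rw [Real.fourier_eq']
  congr 1 with y
  rw [smul_eq_mul, real_inner_smul_left, real_inner_comm]
  push_cast
  ring_nf

theorem integral_prod_inner_mul_fourierChar_smul_eq_zero {f : V → ℂ}
    (hf : ∀ k : ℕ, Integrable fun v => ‖v‖ ^ k * ‖f v‖) (h'f : AEStronglyMeasurable f)
    {ξ : V} (h0 : 𝓕 f =ᶠ[𝓝 ξ] 0) (k : ℕ) (m : Fin k → V) :
    ∫ v, ((∏ j, ⟪v, m j⟫ : ℝ) : ℂ) * (𝐞 (-⟪v, ξ⟫) • f v) = 0 := by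
  have hderiv : iteratedFDeriv ℝ k (𝓕 f) ξ = 0 := by
    simpa using (h0.iteratedFDeriv ℝ k).self_of_nhds
  have hmoment : iteratedFDeriv ℝ k (𝓕 f) ξ m =
      (-(2 * π * Complex.I)) ^ k * ∫ v, ((∏ j, ⟪v, m j⟫ : ℝ) : ℂ) * (𝐞 (-⟪v, ξ⟫) • f v) := by
    rw [Real.iteratedFDeriv_fourier (N := k) (fun i _ => hf i) h'f le_rfl,
      Real.fourier_continuousMultilinearMap_apply
        (VectorFourier.integrable_fourierPowSMulRight _ (hf k) h'f),
      Real.fourier_eq, ← integral_const_mul]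
    congr 1 with v
    have inner_apply (i : Fin k) : innerSL ℝ v (m i) = ⟪v, m i⟫ := rfl
    simp only [VectorFourier.fourierPowSMulRight_apply, inner_apply, Circle.smul_def,
      Complex.real_smul, smul_eq_mul, Complex.ofReal_prod]
    ring
  rw [hderiv, zero_apply, eq_comm] at hmoment
  exact (mul_eq_zero.mp hmoment).resolve_left (by simp [Real.pi_ne_zero])

theorem ae_eq_zero_of_fourier_eventuallyEq_zero {f : V → ℂ} (hf : Integrable f)
    (hcs : HasCompactSupport f) {ξ : V} (h0 : 𝓕 f =ᶠ[𝓝 ξ] 0) :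
    f =ᵐ[volume] 0 := by
  have hmoments (k : ℕ) : Integrable fun v : V => ‖v‖ ^ k * ‖f v‖ :=
    hf.norm.continuous_mul_of_hasCompactSupport hcs.norm (by fun_prop)
  have hg : Integrable fun v => 𝐞 (-⟪v, ξ⟫) • f v := (Real.fourierIntegral_convergent_iff ξ).mpr hf
  have hgcs : HasCompactSupport fun v => 𝐞 (-⟪v, ξ⟫) • f v := hcs.smul_left
  filter_upwards [ae_eq_zero_of_integral_prod_inner_mul_eq_zero hg hgcs
    (integral_prod_inner_mul_fourierChar_smul_eq_zero hmoments hf.aestronglyMeasurable h0)]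
    with v hv
  exact (smul_eq_zero_iff_eq _).mp hv

end Fourier

theorem fourier_vanishing_on_open_set_general
    (n : ℕ) (f : EuclideanSpace ℝ (Fin n) → ℂ)
    (hf : Integrable f) (hcs : HasCompactSupport f)
    (U : Set (EuclideanSpace ℝ (Fin n))) (hU : IsOpen U) (hUne : U.Nonempty)
    (hvanish : ∀ ξ ∈ U,
      (∫ y, Complex.exp (-(Complex.I * ((⟪ξ, y⟫ : ℝ) : ℂ))) * f y) = 0) :
    f =ᵐ[volume] 0 := by
  obtain ⟨ξ, hξ⟩ := hUne
  have hscaled : IsOpen ((fun w => (2 * π) • w) ⁻¹' U) := hU.preimage (continuous_const_smul _)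
  have h0 : 𝓕 f =ᶠ[𝓝 ((2 * π)⁻¹ • ξ)] 0 := by
    have hmem : (2 * π)⁻¹ • ξ ∈ (fun w => (2 * π) • w) ⁻¹' U := by
      simpa only [Set.mem_preimage, smul_inv_smul₀ Real.two_pi_pos.ne'] using hξ
    filter_upwards [hscaled.mem_nhds hmem] with w hw
    rw [Real.fourier_eq_integral_exp_inner_mul]
    exact hvanish _ hw
  exact ae_eq_zero_of_fourier_eventuallyEq_zero hf hcs h0

/-- If the Fourier-type transform `f̂(ξ) = ∫ e^{-i⟨ξ,y⟩} f(y) dy` of a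
compactly supported integrable function vanishes on a nonempty open set,
then `f = 0` almost everywhere. -/
theorem fourier_vanishing_on_open_set
    (n : ℕ) (hn : 1 ≤ n) (f : EuclideanSpace ℝ (Fin n) → ℂ)
    (hf : Integrable f) (hcs : HasCompactSupport f)
    (U : Set (EuclideanSpace ℝ (Fin n))) (hU : IsOpen U) (hUne : U.Nonempty)
    (hvanish : ∀ ξ ∈ U,
      (∫ y, Complex.exp (-(Complex.I * ((⟪ξ, y⟫ : ℝ) : ℂ))) * f y) = 0) :
    f =ᵐ[volume] 0 :=
  fourier_vanishing_on_open_set_general n f hf hcs U hU hUne hvanish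
end

section
/- Let n ∈ {2, 3}, let 0 < k_min < k_max, let f1, f2 : ℝ^n → ℂ be integrable with compact support, let g : ℝ → ℂ be continuous on (k_min, k_max) with g(k) ≠ 0 for all k in some nonempty open subinterval (k_a, k_b) ⊆ (k_min, k_max), let τ1 ∈ ℂ \ {0}, and let z0, z1 ∈ ℝ^n with z0 ≠ z1. If | g(k) u∞_{f1}(x̂, k) + τ e^{−ik⟨x̂, p⟩} | = | g(k) u∞_{f2}(x̂, k) + τ e^{−ik⟨x̂, p⟩} | for all unit vectors x̂ ∈ ℝ^n, all k ∈ (k_min, k_max), all τ ∈ {0, τ1}, and both p ∈ {z0, z1}, then f1 = f2 almost everywhere. (Uniqueness for the phaseless inverse source problem with two reference point sources.) -/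
/-!
Comparing the intensities measured with reference strengths `0` and `τ₁` gives
`Re((u₁ - u₂) · conj c) = 0` for both reference waves `c = τ₁ e^{-ik⟨x̂,p⟩}`, `p = z₀, z₁`. These
two waves are `ℝ`-linearly independent unless `sin (k⟨x̂, z₁ - z₀⟩) = 0`, so if
`⟨x̂, z₁ - z₀⟩ ≠ 0` the phased far fields agree for all but countably many `k ∈ (k_a, k_b)`. For a
compactly supported source, `k ↦ u∞(x̂, k)` is the restriction of an entire function, so they then
agree for every `k`. These directions are dense, so the Fourier transforms of `f₁` and `f₂`
coincide, and hence so do `f₁` and `f₂` almost everywhere.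
-/

open MeasureTheory
open scoped RealInnerProductSpace

open Complex ComplexConjugate
open scoped FourierTransform SchwartzMap

namespace Complex

theorem re_mul_conj_eq_zero_of_norm_add_eq {a b c : ℂ} (h : ‖a‖ = ‖b‖)
    (hc : ‖a + c‖ = ‖b + c‖) : ((a - b) * conj c).re = 0 := by
  have h' : normSq a = normSq b := by simp only [normSq_eq_norm_sq, h]
  have hc' : normSq (a + c) = normSq (b + c) := by simp only [normSq_eq_norm_sq, hc]
  rw [normSq_add, normSq_add] at hc'
  rw [sub_mul, sub_re]
  linarith

theorem eq_zero_of_re_mul_conj_eq_zero {w c₀ c₁ : ℂ} (h₀ : (w * conj c₀).re = 0)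
    (h₁ : (w * conj c₁).re = 0) (hc : (conj c₀ * c₁).im ≠ 0) : w = 0 := by
  simp only [mul_re, mul_im, conj_re, conj_im] at h₀ h₁ hc
  have hdet : c₀.re * c₁.im - c₀.im * c₁.re ≠ 0 := by contrapose! hc; linear_combination hc
  have hre : w.re * (c₀.re * c₁.im - c₀.im * c₁.re) = 0 := by
    linear_combination c₁.im * h₀ - c₀.im * h₁
  have him : w.im * (c₀.re * c₁.im - c₀.im * c₁.re) = 0 := by
    linear_combination c₀.re * h₁ - c₁.re * h₀
  exact ext (by simpa [hdet] using hre) (by simpa [hdet] using him)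

theorem eq_of_norm_add_eq {a b c₀ c₁ : ℂ} (h : ‖a‖ = ‖b‖) (h₀ : ‖a + c₀‖ = ‖b + c₀‖)
    (h₁ : ‖a + c₁‖ = ‖b + c₁‖) (hc : (conj c₀ * c₁).im ≠ 0) : a = b :=
  sub_eq_zero.1 <| eq_zero_of_re_mul_conj_eq_zero (re_mul_conj_eq_zero_of_norm_add_eq h h₀)
    (re_mul_conj_eq_zero_of_norm_add_eq h h₁) hc

theorem im_conj_mul_exp_neg_I_mul (τ : ℂ) (k s₀ s₁ : ℝ) :
    (conj (τ * exp (-(I * k * s₀))) * (τ * exp (-(I * k * s₁)))).im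
      = -(normSq τ * Real.sin (k * (s₁ - s₀))) := by
  have : conj (τ * exp (-(I * k * s₀))) * (τ * exp (-(I * k * s₁)))
      = normSq τ * exp ((-(k * (s₁ - s₀)) : ℝ) * I) := by
    rw [map_mul, ← exp_conj, mul_mul_mul_comm, mul_comm (conj τ), mul_conj, ← exp_add]
    congr 2
    simp only [map_neg, map_mul, conj_I, conj_ofReal]
    push_cast
    ring
  rw [this, im_ofReal_mul, exp_ofReal_mul_I_im, Real.sin_neg, mul_neg]

end Complex

theorem eq_of_phaseless_two_reference_points {E : Type*} [NormedAddCommGroup E]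
    [InnerProductSpace ℝ E] {u₁ u₂ τ : ℂ} {k : ℝ} {x z₀ z₁ : E} (hτ : τ ≠ 0)
    (hsin : Real.sin (k * ⟪x, z₁ - z₀⟫) ≠ 0)
    (h : ∀ τ' ∈ ({0, τ} : Set ℂ), ∀ p ∈ ({z₀, z₁} : Set E),
      ‖u₁ + τ' * exp (-(I * k * (⟪x, p⟫ : ℝ)))‖ = ‖u₂ + τ' * exp (-(I * k * (⟪x, p⟫ : ℝ)))‖) :
    u₁ = u₂ := by
  refine eq_of_norm_add_eq (by simpa using h 0 (by simp) z₀ (by simp))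
    (h τ (by simp) z₀ (by simp)) (h τ (by simp) z₁ (by simp)) ?_
  rw [im_conj_mul_exp_neg_I_mul, ← inner_sub_right]
  simpa [hτ] using hsin

theorem differentiable_integral_cexp_mul {α : Type*} [MeasurableSpace α] {μ : Measure α}
    {F : α → ℂ} {a : α → ℂ} (hF : Integrable F μ) (ha : AEStronglyMeasurable a μ) {C : ℝ}
    (haC : ∀ᵐ y ∂μ, ‖a y‖ ≤ C) :
    Differentiable ℂ fun z : ℂ => ∫ y, exp (z * a y) * F y ∂μ := by
  intro z₀
  have hexp : ∀ z : ℂ, AEStronglyMeasurable (fun y => exp (z * a y)) μ := fun z =>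
    continuous_exp.comp_aestronglyMeasurable (ha.const_mul z)
  have hbound : ∀ᵐ y ∂μ, ∀ z ∈ Metric.ball z₀ 1,
      ‖exp (z * a y)‖ ≤ Real.exp ((‖z₀‖ + 1) * C) := by
    filter_upwards [haC] with y hy z hz
    refine (norm_exp_le_exp_norm _).trans (Real.exp_le_exp.2 ?_)
    rw [norm_mul]
    have : ‖z‖ ≤ ‖z₀‖ + 1 := by
      linarith [norm_le_norm_add_norm_sub' z z₀, (mem_ball_iff_norm.1 hz).le]
    exact mul_le_mul this hy (norm_nonneg _) (by positivity)
  refine (hasDerivAt_integral_of_dominated_loc_of_deriv_le (Metric.ball_mem_nhds z₀ one_pos)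
    (F' := fun z y => a y * exp (z * a y) * F y)
    (bound := fun y => C * Real.exp ((‖z₀‖ + 1) * C) * ‖F y‖)
    (.of_forall fun z => (hexp z).mul hF.1) ?_ ((ha.mul (hexp z₀)).mul hF.1) ?_
    (hF.norm.const_mul _) (.of_forall fun y z _ => ?_)).2.differentiableAt
  · refine hF.bdd_mul (c := Real.exp ((‖z₀‖ + 1) * C)) (hexp z₀) ?_
    filter_upwards [hbound] with y hy using hy z₀ (Metric.mem_ball_self one_pos)
  · filter_upwards [haC, hbound] with y hy hy' z hz
    rw [norm_mul, norm_mul]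
    exact mul_le_mul_of_nonneg_right
      (mul_le_mul hy (hy' z hz) (norm_nonneg _) ((norm_nonneg _).trans hy)) (norm_nonneg _)
  · simpa [mul_comm] using ((hasDerivAt_mul_const (a y)).cexp).mul_const (F y)

theorem ae_eq_zero_of_fourier_eq_zero {V : Type*} [NormedAddCommGroup V] [InnerProductSpace ℝ V]
    [FiniteDimensional ℝ V] [MeasurableSpace V] [BorelSpace V] {F : V → ℂ} (hF : Integrable F)
    (h𝓕F : 𝓕 F = 0) : F =ᵐ[volume] 0 := by
  refine ae_eq_zero_of_integral_contDiff_smul_eq_zero hF.locallyIntegrable fun g hg hgs => ?_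
  let G : 𝓢(V, ℂ) := (hgs.comp_left Complex.ofReal_zero).toSchwartzMap
    (Complex.ofRealCLM.contDiff.comp hg)
  have hG : ∀ x, G x = g x := fun x => rfl
  let ψ : 𝓢(V, ℂ) := 𝓕⁻ G
  have hflip : (innerₗ V).flip = innerₗ V := by
    ext v w; exact real_inner_comm v w
  have hduality := VectorFourier.integral_fourierIntegral_smul_eq_flip (L := innerₗ V)
    Real.continuous_fourierChar continuous_inner hF (ψ.integrable (μ := volume))
  rw [hflip] at hduality
  change ∫ ξ, 𝓕 F ξ • ψ ξ = ∫ x, F x • 𝓕 (ψ : V → ℂ) x at hduality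
  rw [← SchwartzMap.fourier_coe, FourierTransform.fourier_fourierInv_eq, h𝓕F] at hduality
  simpa [hG, Complex.real_smul, mul_comm] using hduality.symm

theorem dense_setOf_inner_ne_zero {V : Type*} [NormedAddCommGroup V] [InnerProductSpace ℝ V]
    [CompleteSpace V] {d : V} (hd : d ≠ 0) : Dense {ξ : V | ⟪ξ, d⟫ ≠ 0} := by
  have hsurj : Function.Surjective (innerSL ℝ d) := fun t =>
    ⟨(t / ⟪d, d⟫) • d, by simp [hd]⟩
  have := (dense_compl_singleton (0 : ℝ)).preimage ((innerSL ℝ d).isOpenMap hsurj)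
  exact this.mono fun ξ hξ => by simpa [real_inner_comm] using hξ

theorem dense_setOf_sin_mul_ne_zero {θ : ℝ} (hθ : θ ≠ 0) :
    Dense {k : ℝ | Real.sin (k * θ) ≠ 0} := by
  refine Set.Countable.dense_compl ℝ ((Set.countable_range fun m : ℤ => m * Real.pi / θ).mono ?_)
  intro k hk
  obtain ⟨m, hm⟩ := Real.sin_eq_zero_iff.1 hk
  exact ⟨m, by simp only [hm, mul_div_cancel_right₀ k hθ]⟩

section FarField

variable {n : ℕ} {f₁ f₂ F : EuclideanSpace ℝ (Fin n) → ℂ}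

theorem farField_sub (hf₁ : Integrable f₁) (hf₂ : Integrable f₂) (x : EuclideanSpace ℝ (Fin n))
    (k : ℝ) : farField (f₁ - f₂) x k = farField f₁ x k - farField f₂ x k := by
  have hint : ∀ f : EuclideanSpace ℝ (Fin n) → ℂ, Integrable f →
      Integrable fun y => exp (-(I * k * (⟪x, y⟫ : ℝ))) * f y := fun f hf =>
    hf.bdd_mul (c := 1) (by fun_prop) (.of_forall fun y => by rw [norm_exp]; simp)
  simp only [farField, Pi.sub_apply, mul_sub]
  exact integral_sub (hint f₁ hf₁) (hint f₂ hf₂)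

theorem farField_eq_fourier (f : EuclideanSpace ℝ (Fin n) → ℂ) (x : EuclideanSpace ℝ (Fin n))
    (k : ℝ) : farField f x k = 𝓕 f ((k / (2 * Real.pi)) • x) := by
  rw [Real.fourier_eq']
  refine integral_congr_ae (.of_forall fun y => ?_)
  have : -2 * Real.pi * ⟪y, (k / (2 * Real.pi)) • x⟫ = -(k * ⟪x, y⟫) := by
    rw [real_inner_smul_right, real_inner_comm]
    field_simp
  simp only [smul_eq_mul, this]
  push_cast
  ring_nf

theorem fourier_eq_farField (f : EuclideanSpace ℝ (Fin n) → ℂ) {ξ : EuclideanSpace ℝ (Fin n)}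
    (hξ : ξ ≠ 0) : 𝓕 f ξ = farField f (‖ξ‖⁻¹ • ξ) (2 * Real.pi * ‖ξ‖) := by
  rw [farField_eq_fourier, smul_smul, mul_div_cancel_left₀ _ Real.two_pi_pos.ne',
    mul_inv_cancel₀ (norm_ne_zero_iff.2 hξ), one_smul]

theorem analyticOnNhd_farField (hF : Integrable F) (hcs : HasCompactSupport F)
    (x : EuclideanSpace ℝ (Fin n)) : AnalyticOnNhd ℝ (farField F x) Set.univ := by
  set a : EuclideanSpace ℝ (Fin n) → ℂ := fun y => -(I * (⟪x, y⟫ : ℝ))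
  have ha : Continuous a := by fun_prop
  obtain ⟨C, hC⟩ := hcs.isCompact.exists_bound_of_continuousOn ha.continuousOn
  have hentire := differentiable_integral_cexp_mul hF.integrableOn ha.aestronglyMeasurable
    ((ae_restrict_iff' (isClosed_tsupport F).measurableSet).2 (.of_forall hC))
  have hfar : farField F x = fun k : ℝ => ∫ y in tsupport F, exp (k * a y) * F y := by
    ext k
    rw [setIntegral_eq_integral_of_forall_compl_eq_zero
      fun y hy => by rw [image_eq_zero_of_notMem_tsupport hy, mul_zero]]
    simp only [farField, a, mul_neg, ← mul_assoc, mul_comm (k : ℂ) I]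
  rw [hfar]
  exact fun k _ => (hentire.analyticAt _).restrictScalars.comp (ofRealCLM.analyticAt k)

theorem farField_eq_zero_of_eqOn_zero (hF : Integrable F) (hcs : HasCompactSupport F)
    {x : EuclideanSpace ℝ (Fin n)} {U : Set ℝ} (hU : IsOpen U) (hne : U.Nonempty)
    (h : Set.EqOn (farField F x) 0 U) (k : ℝ) : farField F x k = 0 := by
  obtain ⟨k₀, hk₀⟩ := hne
  exact (analyticOnNhd_farField hF hcs x).eqOn_zero_of_preconnected_of_eventuallyEq_zero
    isPreconnected_univ (Set.mem_univ k₀) (Filter.eventually_of_mem (hU.mem_nhds hk₀) h)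
    (Set.mem_univ k)

theorem fourier_eq_zero_of_farField_eq_zero (hF : Integrable F) {d : EuclideanSpace ℝ (Fin n)}
    (hd : d ≠ 0) (h : ∀ x, ‖x‖ = 1 → ⟪x, d⟫ ≠ 0 → ∀ k, farField F x k = 0) : 𝓕 F = 0 := by
  have hcont : Continuous (𝓕 F) :=
    VectorFourier.fourierIntegral_continuous Real.continuous_fourierChar continuous_inner hF
  refine hcont.ext_on (dense_setOf_inner_ne_zero hd) continuous_const fun ξ hξ => ?_
  have hξ0 : ξ ≠ 0 := by rintro rfl; simp at hξ
  have hnorm : ‖ξ‖ ≠ 0 := norm_ne_zero_iff.2 hξ0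
  rw [fourier_eq_farField F hξ0]
  refine h _ ?_ ?_ _
  · rw [norm_smul, norm_inv, norm_norm, inv_mul_cancel₀ hnorm]
  · rw [real_inner_smul_left]
    exact mul_ne_zero (inv_ne_zero hnorm) hξ

end FarField

theorem inverse_source_uniqueness_phaseless_two_reference_points_general
    (n : ℕ) (kmin kmax : ℝ)
    (f₁ f₂ : EuclideanSpace ℝ (Fin n) → ℂ)
    (hf₁ : Integrable f₁) (hcs₁ : HasCompactSupport f₁)
    (hf₂ : Integrable f₂) (hcs₂ : HasCompactSupport f₂)
    (g : ℝ → ℂ)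
    (ka kb : ℝ) (hab : ka < kb) (hsub : Set.Ioo ka kb ⊆ Set.Ioo kmin kmax)
    (hgne : ∀ k ∈ Set.Ioo ka kb, g k ≠ 0)
    (τ₁ : ℂ) (hτ₁ : τ₁ ≠ 0)
    (z₀ z₁ : EuclideanSpace ℝ (Fin n)) (hz : z₀ ≠ z₁)
    (hdata : ∀ xhat : EuclideanSpace ℝ (Fin n), ‖xhat‖ = 1 →
      ∀ k ∈ Set.Ioo kmin kmax, ∀ τ ∈ ({0, τ₁} : Set ℂ),
      ∀ p ∈ ({z₀, z₁} : Set (EuclideanSpace ℝ (Fin n))),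
        ‖g k * farField f₁ xhat k
            + τ * Complex.exp (-(Complex.I * (k : ℂ) * ((⟪xhat, p⟫ : ℝ) : ℂ)))‖
          = ‖g k * farField f₂ xhat k
            + τ * Complex.exp (-(Complex.I * (k : ℂ) * ((⟪xhat, p⟫ : ℝ) : ℂ)))‖) :
    f₁ =ᵐ[volume] f₂ := by
  have hF : Integrable (f₁ - f₂) := hf₁.sub hf₂
  have hretrieve : ∀ x, ‖x‖ = 1 → ∀ k ∈ Set.Ioo ka kb, Real.sin (k * ⟪x, z₁ - z₀⟫) ≠ 0 →
      farField (f₁ - f₂) x k = 0 := fun x hx k hk hsin => by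
    rw [farField_sub hf₁ hf₂, sub_eq_zero]
    exact mul_left_cancel₀ (hgne k hk)
      (eq_of_phaseless_two_reference_points hτ₁ hsin (hdata x hx k (hsub hk)))
  have hdir : ∀ x, ‖x‖ = 1 → ⟪x, z₁ - z₀⟫ ≠ 0 → ∀ k, farField (f₁ - f₂) x k = 0 :=
    fun x hx hθ => farField_eq_zero_of_eqOn_zero hF (hcs₁.sub hcs₂)
      (isOpen_Ioo.inter (isOpen_ne_fun (by fun_prop) continuous_const))
      ((dense_setOf_sin_mul_ne_zero hθ).inter_open_nonempty _ isOpen_Ioo (Set.nonempty_Ioo.2 hab))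
      fun k hk => hretrieve x hx k hk.1 hk.2
  exact (sub_ae_eq_zero _ _).1 (ae_eq_zero_of_fourier_eq_zero hF
    (fourier_eq_zero_of_farField_eq_zero hF (sub_ne_zero.2 hz.symm) hdir))

/-- Uniqueness for the phaseless inverse source problem with two reference
point sources: the phaseless far field data with reference strengths
`τ ∈ {0, τ₁}` and reference points `p ∈ {z₀, z₁}` determine the source. -/
theorem inverse_source_uniqueness_phaseless_two_reference_points
    (n : ℕ) (hn : n = 2 ∨ n = 3) (kmin kmax : ℝ)
    (hk : 0 < kmin) (hkk : kmin < kmax)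
    (f₁ f₂ : EuclideanSpace ℝ (Fin n) → ℂ)
    (hf₁ : Integrable f₁) (hcs₁ : HasCompactSupport f₁)
    (hf₂ : Integrable f₂) (hcs₂ : HasCompactSupport f₂)
    (g : ℝ → ℂ) (hg : ContinuousOn g (Set.Ioo kmin kmax))
    (ka kb : ℝ) (hab : ka < kb) (hsub : Set.Ioo ka kb ⊆ Set.Ioo kmin kmax)
    (hgne : ∀ k ∈ Set.Ioo ka kb, g k ≠ 0)
    (τ₁ : ℂ) (hτ₁ : τ₁ ≠ 0)
    (z₀ z₁ : EuclideanSpace ℝ (Fin n)) (hz : z₀ ≠ z₁)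
    (hdata : ∀ xhat : EuclideanSpace ℝ (Fin n), ‖xhat‖ = 1 →
      ∀ k ∈ Set.Ioo kmin kmax, ∀ τ ∈ ({0, τ₁} : Set ℂ),
      ∀ p ∈ ({z₀, z₁} : Set (EuclideanSpace ℝ (Fin n))),
        ‖g k * farField f₁ xhat k
            + τ * Complex.exp (-(Complex.I * (k : ℂ) * ((⟪xhat, p⟫ : ℝ) : ℂ)))‖
          = ‖g k * farField f₂ xhat k
            + τ * Complex.exp (-(Complex.I * (k : ℂ) * ((⟪xhat, p⟫ : ℝ) : ℂ)))‖) :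
    f₁ =ᵐ[volume] f₂ :=
  inverse_source_uniqueness_phaseless_two_reference_points_general n kmin kmax f₁ f₂ hf₁ hcs₁ hf₂
    hcs₂ g ka kb hab hsub hgne τ₁ hτ₁ z₀ z₁ hz hdata
end

section
/- Let n ≥ 1, 0 < k_min < k_max, let f : ℝ^n → ℂ be integrable with support contained in a compact set D, let g : [k_min, k_max] → ℂ be continuously differentiable, and let x̂ ∈ ℝ^n be a unit vector. Define G(z) := ∫_{k_min}^{k_max} g(k) u∞_f(x̂, k) e^{ik⟨x̂, z⟩} dk. If z ∈ ℝ^n is such that d := inf_{y ∈ D} |⟨x̂, z − y⟩| > 0, then |G(z)| ≤ (1/d) · ‖f‖_{L¹} · ( |g(k_min)| + |g(k_max)| + ∫_{k_min}^{k_max} |g'(k)| dk ). (The indicator functional decays like the reciprocal of the distance of the sampling point from the strip S_D(x̂) containing the source support.) -/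
/-! Exchanging the order of integration turns `G(z)` into `∫ f(y) φ(⟨x̂, z - y⟩) dy`, where
`φ(t) = ∫_{k_min}^{k_max} g(k) e^{ikt} dk`. Integrating by parts in `k` gives
`|φ(t)| ≤ (|g(k_min)| + |g(k_max)| + ∫ |g'|) / |t|`, and on the support of `f` we have
`|t| ≥ d`. -/

open MeasureTheory intervalIntegral
open scoped RealInnerProductSpace

open Complex

lemma norm_exp_I_mul_mul (k t : ℝ) : ‖exp (I * k * t)‖ = 1 := by
  simpa [mul_assoc] using norm_exp_I_mul_ofReal (k * t)

lemma norm_intervalIntegral_mul_exp_le {a b : ℝ} (hab : a ≤ b) {g g' : ℝ → ℂ}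
    (hg : ∀ k ∈ Set.Icc a b, HasDerivAt g (g' k) k) (hg' : ContinuousOn g' (Set.Icc a b))
    {t : ℝ} (ht : t ≠ 0) :
    ‖∫ k in a..b, g k * exp (I * k * t)‖
      ≤ (‖g a‖ + ‖g b‖ + ∫ k in a..b, ‖g' k‖) / |t| := by
  set c : ℂ := I * t
  have hc : c ≠ 0 := mul_ne_zero I_ne_zero (ofReal_ne_zero.mpr ht)
  set v : ℝ → ℂ := fun k => exp (c * k) / c
  have hv : ∀ k : ℝ, HasDerivAt v (exp (c * k)) k := fun k => by
    have := (((hasDerivAt_id (k : ℂ)).const_mul c).cexp.comp_ofReal).div_const c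
    simpa [v, hc] using this
  have hv_norm : ∀ k : ℝ, ‖v k‖ = 1 / |t| := fun k => by
    simp [v, c, norm_exp_I_mul_mul]
  have hibp : ∫ k in a..b, g k * exp (I * k * t)
      = g b * v b - g a * v a - ∫ k in a..b, g' k * v k := by
    rw [← integral_mul_deriv_eq_deriv_mul (fun k hk => hg k (by rwa [Set.uIcc_of_le hab] at hk))
      (fun k _ => hv k) (hg'.intervalIntegrable_of_Icc hab)
      ((by fun_prop : Continuous fun k : ℝ => exp (c * k)).intervalIntegrable a b)]
    simp only [c, mul_right_comm I]
  have hrem : ‖∫ k in a..b, g' k * v k‖ ≤ (∫ k in a..b, ‖g' k‖) / |t| := by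
    calc ‖∫ k in a..b, g' k * v k‖ ≤ ∫ k in a..b, ‖g' k * v k‖ :=
          norm_integral_le_integral_norm hab
      _ = (∫ k in a..b, ‖g' k‖) / |t| := by
          simp only [norm_mul, hv_norm, ← intervalIntegral.integral_div, mul_one_div]
  rw [hibp]
  calc ‖g b * v b - g a * v a - ∫ k in a..b, g' k * v k‖
      ≤ ‖g b * v b - g a * v a‖ + ‖∫ k in a..b, g' k * v k‖ := norm_sub_le _ _
    _ ≤ ‖g b * v b‖ + ‖g a * v a‖ + ‖∫ k in a..b, g' k * v k‖ := by
        gcongr; exact norm_sub_le _ _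
    _ ≤ ‖g b‖ / |t| + ‖g a‖ / |t| + (∫ k in a..b, ‖g' k‖) / |t| := by
        simp only [norm_mul, hv_norm, mul_one_div]; gcongr
    _ = (‖g a‖ + ‖g b‖ + ∫ k in a..b, ‖g' k‖) / |t| := by ring

lemma intervalIntegral_mul_farField_mul_exp {n : ℕ} {a b : ℝ} (hab : a ≤ b)
    {f : EuclideanSpace ℝ (Fin n) → ℂ} (hf : Integrable f) {g : ℝ → ℂ}
    (hg : IntervalIntegrable g volume a b) (xhat z : EuclideanSpace ℝ (Fin n)) :
    ∫ k in a..b, g k * farField f xhat k * exp (I * k * ⟪xhat, z⟫)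
      = ∫ y, f y * ∫ k in a..b, g k * exp (I * k * ⟪xhat, z - y⟫) := by
  have hpoint : ∀ k : ℝ, g k * farField f xhat k * exp (I * k * ⟪xhat, z⟫)
      = ∫ y, g k * (f y * exp (I * k * ⟪xhat, z - y⟫)) := fun k => by
    rw [farField, mul_right_comm, ← MeasureTheory.integral_const_mul]
    congr 1; ext y
    rw [inner_sub_right, ofReal_sub, mul_sub, sub_eq_add_neg, exp_add]
    ring
  have hint : Integrable (fun p : ℝ × EuclideanSpace ℝ (Fin n) =>
      g p.1 * (f p.2 * exp (I * p.1 * ⟪xhat, z - p.2⟫)))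
      ((volume.restrict (Set.Ioc a b)).prod volume) := by
    have hexp : Continuous fun p : ℝ × EuclideanSpace ℝ (Fin n) =>
        exp (I * p.1 * ⟪xhat, z - p.2⟫) := by fun_prop
    simpa only [mul_assoc] using (hg.1.mul_prod hf).mul_bdd hexp.aestronglyMeasurable
      (ae_of_all _ fun p => (norm_exp_I_mul_mul _ _).le)
  simp_rw [hpoint]
  rw [intervalIntegral.integral_of_le hab, integral_integral_swap hint]
  congr 1; ext y
  rw [intervalIntegral.integral_of_le hab, ← MeasureTheory.integral_const_mul]
  congr 1; ext k
  ring

theorem indicator_decay_away_from_strip_general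
    (n : ℕ) (kmin kmax : ℝ) (hkk : kmin < kmax)
    (f : EuclideanSpace ℝ (Fin n) → ℂ) (hf : Integrable f)
    (D : Set (EuclideanSpace ℝ (Fin n)))
    (hsupp : Function.support f ⊆ D)
    (g g' : ℝ → ℂ)
    (hg : ∀ k ∈ Set.Icc kmin kmax, HasDerivAt g (g' k) k)
    (hg' : ContinuousOn g' (Set.Icc kmin kmax))
    (xhat : EuclideanSpace ℝ (Fin n))
    (z : EuclideanSpace ℝ (Fin n)) (d : ℝ)
    (hd : d = sInf ((fun y => |(⟪xhat, z - y⟫ : ℝ)|) '' D)) (hdpos : 0 < d) :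
    ‖(∫ k in kmin..kmax,
          g k * farField f xhat k
            * Complex.exp (Complex.I * (k : ℂ) * ((⟪xhat, z⟫ : ℝ) : ℂ)))‖
      ≤ (1 / d) * (∫ y, ‖f y‖) *
          (‖g kmin‖ + ‖g kmax‖
            + ∫ k in kmin..kmax, ‖g' k‖) := by
  set C := ‖g kmin‖ + ‖g kmax‖ + ∫ k in kmin..kmax, ‖g' k‖
  have hC : 0 ≤ C :=
    add_nonneg (by positivity) (intervalIntegral.integral_nonneg hkk.le fun _ _ => norm_nonneg _)
  have hdist : ∀ y ∈ D, d ≤ |⟪xhat, z - y⟫| := fun y hy =>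
    hd ▸ csInf_le ⟨0, by rintro _ ⟨_, -, rfl⟩; exact abs_nonneg _⟩ ⟨y, hy, rfl⟩
  have hbound : ∀ y, ‖f y * ∫ k in kmin..kmax, g k * exp (I * k * ⟪xhat, z - y⟫)‖
      ≤ ‖f y‖ * (C / d) := fun y => by
    by_cases hy : f y = 0
    · simp [hy]
    have hyd := hdist y (hsupp hy)
    rw [norm_mul]
    gcongr
    calc _ ≤ C / |⟪xhat, z - y⟫| :=
          norm_intervalIntegral_mul_exp_le hkk.le hg hg' (abs_pos.mp (hdpos.trans_le hyd))
      _ ≤ C / d := by gcongr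
  have hgint : IntervalIntegrable g volume kmin kmax :=
    ContinuousOn.intervalIntegrable_of_Icc hkk.le fun k hk =>
      (hg k hk).continuousAt.continuousWithinAt
  rw [intervalIntegral_mul_farField_mul_exp hkk.le hf hgint]
  calc _ ≤ ∫ y, ‖f y‖ * (C / d) :=
        norm_integral_le_of_norm_le (hf.norm.mul_const _) (ae_of_all _ hbound)
    _ = 1 / d * (∫ y, ‖f y‖) * C := by rw [MeasureTheory.integral_mul_const]; ring

/-- The direct sampling indicator functional
`G(z) = ∫_{k_min}^{k_max} g(k) u∞_f(x̂,k) e^{ik⟨x̂,z⟩} dk` decays like the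
reciprocal of the distance `d = inf_{y ∈ D} |⟨x̂, z - y⟩|` of the sampling
point `z` from the strip `S_D(x̂)` containing the source support. -/
theorem indicator_decay_away_from_strip
    (n : ℕ) (hn : 1 ≤ n) (kmin kmax : ℝ) (hk : 0 < kmin) (hkk : kmin < kmax)
    (f : EuclideanSpace ℝ (Fin n) → ℂ) (hf : Integrable f)
    (D : Set (EuclideanSpace ℝ (Fin n))) (hD : IsCompact D)
    (hsupp : Function.support f ⊆ D)
    (g g' : ℝ → ℂ)
    (hg : ∀ k ∈ Set.Icc kmin kmax, HasDerivAt g (g' k) k)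
    (hg' : ContinuousOn g' (Set.Icc kmin kmax))
    (xhat : EuclideanSpace ℝ (Fin n)) (hx : ‖xhat‖ = 1)
    (z : EuclideanSpace ℝ (Fin n)) (d : ℝ)
    (hd : d = sInf ((fun y => |(⟪xhat, z - y⟫ : ℝ)|) '' D)) (hdpos : 0 < d) :
    ‖(∫ k in kmin..kmax,
          g k * farField f xhat k
            * Complex.exp (Complex.I * (k : ℂ) * ((⟪xhat, z⟫ : ℝ) : ℂ)))‖
      ≤ (1 / d) * (∫ y, ‖f y‖) *
          (‖g kmin‖ + ‖g kmax‖
            + ∫ k in kmin..kmax, ‖g' k‖) :=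
  indicator_decay_away_from_strip_general n kmin kmax hkk f hf D hsupp g g' hg hg' xhat z d hd hdpos
end

section
/- Let n ≥ 1, 0 < k_min < k_max, let f : ℝ^n → ℂ be integrable with compact support, let g : [k_min, k_max] → ℂ be continuous, let x̂ ∈ ℝ^n be a unit vector, let τ ∈ ℂ, and let z0, z ∈ ℝ^n. Define G(w) := ∫_{k_min}^{k_max} g(k) u∞_f(x̂, k) e^{ik⟨x̂, w⟩} dk for w ∈ ℝ^n, and define F(k) := | g(k) u∞_f(x̂, k) + τ e^{−ik⟨x̂, z0⟩} |² − | g(k) u∞_f(x̂, k) |² − |τ|². Then ∫_{k_min}^{k_max} F(k) cos( k ⟨x̂, z − z0⟩ ) dk = V + conj(V), where V := (conj(τ)/2) · ( G(z) + G(2 z0 − z) ). (The phaseless indicator of the direct sampling method equals twice the real part of a superposition of the phased indicator at z and at the point 2z0 − z symmetric to z about the reference point z0.) -/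
/-!
Put `w = τ e^{-ik⟨x̂,z₀⟩}`, so `‖w‖ = ‖τ‖`, and `h = g(k) u∞_f(x̂,k)`. Polarization gives
`‖h + w‖² - ‖h‖² - ‖w‖² = 2 Re (h w̄)`, and writing `cos θ = (e^{iθ} + e^{-iθ}) / 2` with
`θ = k⟨x̂, z - z₀⟩` splits `h w̄ cos θ` into `τ̄/2` times the integrands of `G` at `z` and at
`2z₀ - z`, because `⟨x̂, z₀⟩ ± ⟨x̂, z - z₀⟩` equals `⟨x̂, z⟩` and `⟨x̂, 2z₀ - z⟩`. The real part then
commutes with the `k`-integral, the integrand being continuous in `k`.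
-/

open MeasureTheory intervalIntegral
open scoped RealInnerProductSpace

/-- The indicator functional
`G(w) = ∫_{k_min}^{k_max} g(k) u∞_f(x̂,k) e^{ik⟨x̂,w⟩} dk` of the direct
sampling method. -/
noncomputable def indicatorG {n : ℕ} (kmin kmax : ℝ)
    (f : EuclideanSpace ℝ (Fin n) → ℂ) (g : ℝ → ℂ)
    (xhat w : EuclideanSpace ℝ (Fin n)) : ℂ :=
  ∫ k in kmin..kmax,
    g k * farField f xhat k * Complex.exp (Complex.I * (k : ℂ) * ((⟪xhat, w⟫ : ℝ) : ℂ))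

open Complex ComplexConjugate

lemma norm_add_sq_sub_norm_sq_sub_norm_sq (z w : ℂ) :
    ‖z + w‖ ^ 2 - ‖z‖ ^ 2 - ‖w‖ ^ 2 = 2 * (z * conj w).re := by
  simp only [← Complex.normSq_eq_norm_sq, Complex.normSq_add]
  ring

lemma norm_mul_exp_neg_I_mul (τ : ℂ) (k a : ℝ) :
    ‖τ * exp (-(I * k * a))‖ = ‖τ‖ := by
  rw [norm_mul, show -(I * k * a) = ((-(k * a) : ℝ) : ℂ) * I by push_cast; ring,
    norm_exp_ofReal_mul_I, mul_one]

lemma mul_conj_exp_mul_cos (h τ : ℂ) (k a c : ℝ) :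
    h * conj (τ * exp (-(I * k * a))) * Real.cos (k * (c - a))
      = conj τ / 2 * (h * exp (I * k * c) + h * exp (I * k * ((2 * a - c : ℝ) : ℂ))) := by
  have hc : exp (I * k * c) = exp (I * k * a) * exp (k * (c - a) * I) := by
    rw [← exp_add]; ring_nf
  have hs : exp (I * k * ((2 * a - c : ℝ) : ℂ)) = exp (I * k * a) * exp (-(k * (c - a)) * I) := by
    rw [← exp_add]; push_cast; ring_nf
  rw [map_mul, ← exp_conj, ofReal_cos, cos, hc, hs]
  simp only [map_neg, map_mul, conj_I, conj_ofReal, neg_mul, neg_neg]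
  push_cast
  ring

lemma phaseless_integrand_eq_two_mul_re (h τ : ℂ) (k a c : ℝ) :
    (‖h + τ * exp (-(I * k * a))‖ ^ 2 - ‖h‖ ^ 2 - ‖τ‖ ^ 2) * Real.cos (k * (c - a))
      = 2 * (conj τ / 2 * (h * exp (I * k * c) + h * exp (I * k * ((2 * a - c : ℝ) : ℂ)))).re := by
  rw [← norm_mul_exp_neg_I_mul τ k a, norm_add_sq_sub_norm_sq_sub_norm_sq,
    ← mul_conj_exp_mul_cos, re_mul_ofReal]
  ring

lemma continuous_farField {n : ℕ} {f : EuclideanSpace ℝ (Fin n) → ℂ} (hf : Integrable f)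
    (xhat : EuclideanSpace ℝ (Fin n)) : Continuous (farField f xhat) := by
  have hphase (k : ℝ) (y : EuclideanSpace ℝ (Fin n)) :
      ‖exp (-(I * k * ((⟪xhat, y⟫ : ℝ) : ℂ)))‖ = 1 := by
    simpa using norm_mul_exp_neg_I_mul 1 k ⟪xhat, y⟫
  refine continuous_of_dominated (bound := fun y ↦ ‖f y‖) (fun k ↦ ?_) (fun k ↦ ?_) hf.norm ?_
  · exact (Continuous.aestronglyMeasurable (by fun_prop)).mul hf.1
  · exact .of_forall fun y ↦ by rw [norm_mul, hphase, one_mul]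
  · exact .of_forall fun y ↦ by fun_prop

lemma intervalIntegrable_indicatorG_integrand {n : ℕ} {kmin kmax : ℝ} (hle : kmin ≤ kmax)
    {f : EuclideanSpace ℝ (Fin n) → ℂ} (hf : Integrable f) {g : ℝ → ℂ}
    (hg : ContinuousOn g (Set.Icc kmin kmax)) (xhat w : EuclideanSpace ℝ (Fin n)) :
    IntervalIntegrable
      (fun k : ℝ ↦ g k * farField f xhat k * exp (I * k * ((⟪xhat, w⟫ : ℝ) : ℂ)))
      volume kmin kmax := by
  refine ContinuousOn.intervalIntegrable ?_
  rw [Set.uIcc_of_le hle]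
  exact (hg.mul (continuous_farField hf xhat).continuousOn).mul (by fun_prop)

theorem phaseless_indicator_identity_general
    (n : ℕ) (kmin kmax : ℝ) (hkk : kmin < kmax)
    (f : EuclideanSpace ℝ (Fin n) → ℂ)
    (hf : Integrable f)
    (g : ℝ → ℂ) (hg : ContinuousOn g (Set.Icc kmin kmax))
    (xhat : EuclideanSpace ℝ (Fin n))
    (τ : ℂ) (z₀ z : EuclideanSpace ℝ (Fin n)) :
    ((∫ k in kmin..kmax,
        ((‖(g k * farField f xhat k
            + τ * Complex.exp (-(Complex.I * (k : ℂ) * ((⟪xhat, z₀⟫ : ℝ) : ℂ))))‖)^2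
          - (‖g k * farField f xhat k‖)^2
          - (‖τ‖)^2)
          * Real.cos (k * (⟪xhat, z - z₀⟫ : ℝ)) : ℝ) : ℂ)
      = (starRingEnd ℂ τ / 2)
          * (indicatorG kmin kmax f g xhat z
              + indicatorG kmin kmax f g xhat ((2 : ℝ) • z₀ - z))
        + starRingEnd ℂ ((starRingEnd ℂ τ / 2)
          * (indicatorG kmin kmax f g xhat z
              + indicatorG kmin kmax f g xhat ((2 : ℝ) • z₀ - z))) := by
  have hsym : ⟪xhat, (2 : ℝ) • z₀ - z⟫ = 2 * ⟪xhat, z₀⟫ - ⟪xhat, z⟫ := by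
    rw [inner_sub_right, real_inner_smul_right]
  have hint (w : EuclideanSpace ℝ (Fin n)) :=
    intervalIntegrable_indicatorG_integrand hkk.le hf hg xhat w
  set W : ℝ → ℂ := fun k ↦ conj τ / 2 * (g k * farField f xhat k * exp (I * k * ⟪xhat, z⟫)
      + g k * farField f xhat k * exp (I * k * ((2 * ⟪xhat, z₀⟫ - ⟪xhat, z⟫ : ℝ) : ℂ)))
  have hW : IntervalIntegrable W volume kmin kmax :=
    ((hint z).add (hsym ▸ hint ((2 : ℝ) • z₀ - z))).const_mul _
  have hG : conj τ / 2 * (indicatorG kmin kmax f g xhat z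
      + indicatorG kmin kmax f g xhat ((2 : ℝ) • z₀ - z)) = ∫ k in kmin..kmax, W k := by
    rw [intervalIntegral.integral_const_mul, integral_add (hint z) (hsym ▸ hint _),
      indicatorG, indicatorG, hsym]
  simp only [inner_sub_right, phaseless_integrand_eq_two_mul_re, hG, add_conj,
    intervalIntegral.integral_const_mul]
  exact congrArg (fun x : ℝ ↦ ((2 * x : ℝ) : ℂ)) (intervalIntegral_re hW)

/-- The phaseless indicator of the direct sampling method equals twice the
real part of a superposition of the phased indicator at `z` and at the point
`2z₀ - z` symmetric to `z` about the reference point `z₀`. -/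
theorem phaseless_indicator_identity
    (n : ℕ) (hn : 1 ≤ n) (kmin kmax : ℝ) (hk : 0 < kmin) (hkk : kmin < kmax)
    (f : EuclideanSpace ℝ (Fin n) → ℂ)
    (hf : Integrable f) (hcs : HasCompactSupport f)
    (g : ℝ → ℂ) (hg : ContinuousOn g (Set.Icc kmin kmax))
    (xhat : EuclideanSpace ℝ (Fin n)) (hx : ‖xhat‖ = 1)
    (τ : ℂ) (z₀ z : EuclideanSpace ℝ (Fin n)) :
    ((∫ k in kmin..kmax,
        ((‖(g k * farField f xhat k
            + τ * Complex.exp (-(Complex.I * (k : ℂ) * ((⟪xhat, z₀⟫ : ℝ) : ℂ))))‖)^2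
          - (‖g k * farField f xhat k‖)^2
          - (‖τ‖)^2)
          * Real.cos (k * (⟪xhat, z - z₀⟫ : ℝ)) : ℝ) : ℂ)
      = (starRingEnd ℂ τ / 2)
          * (indicatorG kmin kmax f g xhat z
              + indicatorG kmin kmax f g xhat ((2 : ℝ) • z₀ - z))
        + starRingEnd ℂ ((starRingEnd ℂ τ / 2)
          * (indicatorG kmin kmax f g xhat z
              + indicatorG kmin kmax f g xhat ((2 : ℝ) • z₀ - z))) :=
  phaseless_indicator_identity_general n kmin kmax hkk f hf g hg xhat τ z₀ z
end
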